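/- A graph G is an OAT graph if and only if every connected component of G is an OAT graph. -/

import Mathlib

/-- The disjoint union of two simple graphs. -/
def dUnion {V W : Type} (G : SimpleGraph V) (H : SimpleGraph W) : SimpleGraph (V ⊕ W) :=
  SimpleGraph.fromRel (fun a b =>
    (∃ x y, a = Sum.inl x ∧ b = Sum.inl y ∧ G.Adj x y) ∨
    (∃ x y, a = Sum.inr x ∧ b = Sum.inr y ∧ H.Adj x y))

/-- The join of two simple graphs: all edges between the two sides are added. -/
def joinG {V W : Type} (G : SimpleGraph V) (H : SimpleGraph W) : SimpleGraph (V ⊕ W) :=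
  SimpleGraph.fromRel (fun a b =>
    (∃ x y, a = Sum.inl x ∧ b = Sum.inl y ∧ G.Adj x y) ∨
    (∃ x y, a = Sum.inr x ∧ b = Sum.inr y ∧ H.Adj x y) ∨
    (∃ x y, a = Sum.inl x ∧ b = Sum.inr y))

/-- Adding a new vertex (`none`) whose neighbourhood is the set `X`. When
`X ⊆ N(v)` this is the operation of adding a vertex comparable to `v`. -/
def addComparable {V : Type} (G : SimpleGraph V) (X : Set V) : SimpleGraph (Option V) :=
  SimpleGraph.fromRel (fun a b =>
    (∃ x y, a = some x ∧ b = some y ∧ G.Adj x y) ∨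
    (∃ x, a = none ∧ b = some x ∧ x ∈ X))

/-- Attaching a complete graph on `q` vertices to the vertex `v`: every new
vertex is adjacent to `v` and to every other new vertex. -/
def attachClique {V : Type} (G : SimpleGraph V) (v : V) (q : ℕ) : SimpleGraph (V ⊕ Fin q) :=
  SimpleGraph.fromRel (fun a b =>
    (∃ x y, a = Sum.inl x ∧ b = Sum.inl y ∧ G.Adj x y) ∨
    (∃ i j, a = Sum.inr i ∧ b = Sum.inr j) ∨
    (∃ i, a = Sum.inl v ∧ b = Sum.inr i))

/-- OAT graphs: graphs constructible from single vertices by disjoint union,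
join, adding a comparable vertex, and attaching a clique to a vertex
(up to isomorphism). -/
inductive IsOAT : {V : Type} → SimpleGraph V → Prop
  | single : IsOAT (⊥ : SimpleGraph (Fin 1))
  | dunion {V W : Type} {G : SimpleGraph V} {H : SimpleGraph W} :
      IsOAT G → IsOAT H → IsOAT (dUnion G H)
  | join {V W : Type} {G : SimpleGraph V} {H : SimpleGraph W} :
      IsOAT G → IsOAT H → IsOAT (joinG G H)
  | comparable {V : Type} {G : SimpleGraph V} (v : V) (X : Set V)
      (hX : X ⊆ G.neighborSet v) : IsOAT G → IsOAT (addComparable G X)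
  | clique {V : Type} {G : SimpleGraph V} (v : V) (q : ℕ) (hq : 1 ≤ q) :
      IsOAT G → IsOAT (attachClique G v q)
  | iso {V W : Type} {G : SimpleGraph V} {H : SimpleGraph W} :
      IsOAT G → G ≃g H → IsOAT H

/-!
Call a vertex set closed if it is closed under adjacency, i.e. a union of connected components.
Each OAT operation commutes with restriction to a nonempty closed set: such a set of a disjoint
union splits into closed sets of the two sides, in a join of nonempty graphs it is everything,
and it contains an added comparable vertex or clique only together with the vertices they are
attached to (and otherwise lies in the old graph). By induction on the construction, every graph
induced by an OAT graph on a nonempty closed set is OAT; components are such sets. Conversely, a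
closed set is the disjoint union of one component and a smaller closed set, so induction on closed
sets rebuilds the graph from its components.
-/

open SimpleGraph

section Adj
variable {V W : Type} (G : SimpleGraph V) (H : SimpleGraph W)

@[simp] lemma dUnion_adj_inl_inl (x y : V) :
    (dUnion G H).Adj (Sum.inl x) (Sum.inl y) ↔ G.Adj x y := by
  simp [dUnion, G.adj_comm y x]; exact fun h => h.ne

@[simp] lemma dUnion_adj_inr_inr (x y : W) :
    (dUnion G H).Adj (Sum.inr x) (Sum.inr y) ↔ H.Adj x y := by
  simp [dUnion, H.adj_comm y x]; exact fun h => h.ne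

@[simp] lemma dUnion_not_adj_inl_inr (x : V) (y : W) :
    ¬ (dUnion G H).Adj (Sum.inl x) (Sum.inr y) := by
  simp [dUnion]

@[simp] lemma dUnion_not_adj_inr_inl (x : W) (y : V) :
    ¬ (dUnion G H).Adj (Sum.inr x) (Sum.inl y) := by
  simp [dUnion]

@[simp] lemma joinG_adj_inl_inr (x : V) (y : W) :
    (joinG G H).Adj (Sum.inl x) (Sum.inr y) := by
  simp [joinG]

@[simp] lemma joinG_adj_inr_inl (x : W) (y : V) :
    (joinG G H).Adj (Sum.inr x) (Sum.inl y) := by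
  simp [joinG]

variable (X : Set V) (v : V) (q : ℕ)

@[simp] lemma addComparable_adj_some_some (x y : V) :
    (addComparable G X).Adj (some x) (some y) ↔ G.Adj x y := by
  simp [addComparable, G.adj_comm y x]; exact fun h => h.ne

@[simp] lemma addComparable_adj_none_some (x : V) :
    (addComparable G X).Adj none (some x) ↔ x ∈ X := by
  simp [addComparable]

@[simp] lemma addComparable_adj_some_none (x : V) :
    (addComparable G X).Adj (some x) none ↔ x ∈ X := by
  simp [addComparable]

@[simp] lemma attachClique_adj_inl_inl (x y : V) :
    (attachClique G v q).Adj (Sum.inl x) (Sum.inl y) ↔ G.Adj x y := by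
  simp [attachClique, G.adj_comm y x]; exact fun h => h.ne

@[simp] lemma attachClique_adj_inr_inr (i j : Fin q) :
    (attachClique G v q).Adj (Sum.inr i) (Sum.inr j) ↔ i ≠ j := by
  simp [attachClique]

@[simp] lemma attachClique_adj_inl_inr (x : V) (i : Fin q) :
    (attachClique G v q).Adj (Sum.inl x) (Sum.inr i) ↔ x = v := by
  simp [attachClique]

@[simp] lemma attachClique_adj_inr_inl (i : Fin q) (y : V) :
    (attachClique G v q).Adj (Sum.inr i) (Sum.inl y) ↔ y = v := by
  simp [attachClique]

end Adj

namespace SimpleGraph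

variable {V W : Type} {G : SimpleGraph V} {H : SimpleGraph W}

def IsAdjClosed (G : SimpleGraph V) (S : Set V) : Prop :=
  ∀ ⦃a b : V⦄, a ∈ S → G.Adj a b → b ∈ S

lemma isAdjClosed_univ : G.IsAdjClosed Set.univ := fun _ _ _ _ => trivial

lemma ConnectedComponent.isAdjClosed_supp (c : G.ConnectedComponent) : G.IsAdjClosed c.supp :=
  fun _ _ ha hab => (c.mem_supp_congr_adj hab).mp ha

lemma IsAdjClosed.diff {S T : Set V} (hS : G.IsAdjClosed S) (hT : G.IsAdjClosed T) :
    G.IsAdjClosed (S \ T) :=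
  fun _ _ ha hab => ⟨hS ha.1 hab, fun hb => ha.2 (hT hb hab.symm)⟩

lemma IsAdjClosed.mem_of_reachable {S : Set V} (hS : G.IsAdjClosed S) {a b : V}
    (ha : a ∈ S) (hab : G.Reachable a b) : b ∈ S := by
  obtain ⟨w⟩ := hab
  induction w with
  | nil => exact ha
  | cons h _ ih => exact ih (hS ha h)

lemma IsAdjClosed.supp_subset {S : Set V} (hS : G.IsAdjClosed S) {a : V} (ha : a ∈ S) :
    (G.connectedComponentMk a).supp ⊆ S := fun _ hb =>
  hS.mem_of_reachable ha (ConnectedComponent.exact hb).symm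

lemma IsAdjClosed.preimage {S : Set W} (hS : H.IsAdjClosed S) (f : G →g H) :
    G.IsAdjClosed (f ⁻¹' S) :=
  fun _ _ ha hab => hS ha (f.map_adj hab)

noncomputable def Embedding.induceIsoOfSubsetRange (f : G ↪g H) {S : Set W}
    (hS : S ⊆ Set.range f) : G.induce (f ⁻¹' S) ≃g H.induce S where
  toEquiv := Equiv.ofBijective ((Set.mapsTo_preimage f S).restrict f _ _)
    ⟨(Set.mapsTo_preimage f S).restrict_inj.mpr f.injective.injOn, by
      rintro ⟨b, hb⟩
      obtain ⟨a, rfl⟩ := hS hb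
      exact ⟨⟨a, hb⟩, rfl⟩⟩
  map_rel_iff' := f.map_adj_iff

noncomputable def IsAdjClosed.induceIsoDUnion {C S : Set V} (hC : G.IsAdjClosed C)
    (hCS : C ⊆ S) : dUnion (G.induce C) (G.induce (S \ C)) ≃g G.induce S := by
  classical
  exact {
    toEquiv := Equiv.Set.sumDiffSubset hCS
    map_rel_iff' := by
      rintro (⟨a, ha⟩ | ⟨a, ha⟩) (⟨b, hb⟩ | ⟨b, hb⟩) <;>
        simp only [Equiv.Set.sumDiffSubset_apply_inl, Equiv.Set.sumDiffSubset_apply_inr,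
          Set.inclusion_mk, comap_adj, Function.Embedding.subtype_apply, dUnion_adj_inl_inl,
          dUnion_adj_inr_inr, dUnion_not_adj_inl_inr, dUnion_not_adj_inr_inl, iff_false]
      exacts [fun h => hb.2 (hC ha h), fun h => ha.2 (hC hb h.symm)] }

end SimpleGraph

section Constructions

variable {V W : Type} (G : SimpleGraph V) (H : SimpleGraph W)

def dUnion.inlEmbedding : G ↪g dUnion G H := ⟨.inl, by simp⟩

def dUnion.inrEmbedding : H ↪g dUnion G H := ⟨.inr, by simp⟩

def addComparable.someEmbedding (X : Set V) : G ↪g addComparable G X := ⟨.some, by simp⟩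

def attachClique.inlEmbedding (v : V) (q : ℕ) : G ↪g attachClique G v q := ⟨.inl, by simp⟩

def dUnion.induceIso (S : Set (V ⊕ W)) :
    (dUnion G H).induce S ≃g
      dUnion (G.induce (Sum.inl ⁻¹' S)) (H.induce (Sum.inr ⁻¹' S)) where
  toEquiv := Equiv.subtypeSum
  map_rel_iff' := by rintro ⟨_ | _, _⟩ ⟨_ | _, _⟩ <;> simp [Equiv.subtypeSum]

def addComparable.induceIso (X : Set V) {S : Set (Option V)} (hS : none ∈ S) :
    (addComparable G X).induce S ≃g
      addComparable (G.induce (some ⁻¹' S)) (Subtype.val ⁻¹' X) where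
  toFun
    | ⟨none, _⟩ => none
    | ⟨some x, hx⟩ => some ⟨x, hx⟩
  invFun
    | none => ⟨none, hS⟩
    | some x => ⟨some x.1, x.2⟩
  left_inv := by rintro ⟨_ | _, _⟩ <;> rfl
  right_inv := by rintro (_ | _) <;> rfl
  map_rel_iff' := by rintro ⟨_ | _, _⟩ ⟨_ | _, _⟩ <;> simp

def attachClique.induceIso {v : V} (q : ℕ) {S : Set (V ⊕ Fin q)} (hv : Sum.inl v ∈ S)
    (hS : ∀ i, Sum.inr i ∈ S) :
    (attachClique G v q).induce S ≃g
      attachClique (G.induce (Sum.inl ⁻¹' S)) ⟨v, hv⟩ q where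
  toEquiv := Equiv.subtypeSum.trans ((Equiv.refl _).sumCongr (Equiv.subtypeUnivEquiv hS))
  map_rel_iff' := by
    rintro ⟨_ | _, _⟩ ⟨_ | _, _⟩ <;> simp [Equiv.subtypeSum, Subtype.ext_iff]

end Constructions

section OAT

variable {V W : Type} {G : SimpleGraph V} {H : SimpleGraph W}

lemma IsOAT.nonempty (h : IsOAT G) : Nonempty V := by
  induction h with
  | single => exact ⟨0⟩
  | dunion _ _ ihG _ => exact ⟨.inl ihG.some⟩
  | join _ _ ihG _ => exact ⟨.inl ihG.some⟩
  | comparable => exact ⟨none⟩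
  | clique v => exact ⟨.inl v⟩
  | iso _ e ih => exact ih.map e

lemma isOAT_of_subsingleton [Subsingleton V] [Nonempty V] (G : SimpleGraph V) : IsOAT G :=
  IsOAT.single.iso
    { toEquiv := equivOfSubsingletonOfSubsingleton (fun _ => Classical.arbitrary V) (fun _ => 0)
      map_rel_iff' := iff_of_false (fun h => h.ne (Subsingleton.elim _ _)) (by simp) }

def IsOATOnClosed (G : SimpleGraph V) : Prop :=
  ∀ S : Set V, S.Nonempty → G.IsAdjClosed S → IsOAT (G.induce S)

lemma IsOATOnClosed.induce_of_subset_range (hG : IsOATOnClosed G) (f : G ↪g H) {S : Set W}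
    (hne : S.Nonempty) (hS : H.IsAdjClosed S) (hf : S ⊆ Set.range f) : IsOAT (H.induce S) :=
  (hG _ (hne.preimage' hf) (hS.preimage f.toHom)).iso (f.induceIsoOfSubsetRange hf)

lemma isOATOnClosed_single : IsOATOnClosed (⊥ : SimpleGraph (Fin 1)) := by
  rintro S ⟨x, hx⟩ -
  have : Nonempty S := ⟨⟨x, hx⟩⟩
  exact isOAT_of_subsingleton _

lemma IsOATOnClosed.dUnion (hG : IsOATOnClosed G) (hH : IsOATOnClosed H) :
    IsOATOnClosed (dUnion G H) := by
  intro S hne hS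
  by_cases h₁ : (Sum.inl ⁻¹' S).Nonempty
  · by_cases h₂ : (Sum.inr ⁻¹' S).Nonempty
    · exact ((hG _ h₁ (hS.preimage (dUnion.inlEmbedding G H).toHom)).dunion
        (hH _ h₂ (hS.preimage (dUnion.inrEmbedding G H).toHom))).iso (dUnion.induceIso G H S).symm
    · refine hG.induce_of_subset_range (dUnion.inlEmbedding G H) hne hS ?_
      rintro (x | y) h
      exacts [⟨x, rfl⟩, absurd ⟨y, h⟩ h₂]
  · refine hH.induce_of_subset_range (dUnion.inrEmbedding G H) hne hS ?_
    rintro (x | y) h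
    exacts [absurd ⟨x, h⟩ h₁, ⟨y, rfl⟩]

lemma joinG_isAdjClosed_eq_univ [Nonempty V] [Nonempty W] {S : Set (V ⊕ W)}
    (hne : S.Nonempty) (hS : (joinG G H).IsAdjClosed S) : S = Set.univ := by
  obtain ⟨a⟩ := ‹Nonempty V›
  obtain ⟨b⟩ := ‹Nonempty W›
  have ha : Sum.inl a ∈ S := by
    obtain ⟨x | y, h⟩ := hne
    · exact hS (hS h (joinG_adj_inl_inr G H x b)) (joinG_adj_inr_inl G H b a)
    · exact hS h (joinG_adj_inr_inl G H y a)
  have hb : Sum.inr b ∈ S := hS ha (joinG_adj_inl_inr G H a b)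
  refine Set.eq_univ_of_forall ?_
  rintro (x | y)
  exacts [hS hb (joinG_adj_inr_inl G H b x), hS ha (joinG_adj_inl_inr G H a y)]

lemma isOATOnClosed_joinG (hG : IsOAT G) (hH : IsOAT H) : IsOATOnClosed (joinG G H) := by
  have := hG.nonempty
  have := hH.nonempty
  rintro S hne hS
  obtain rfl := joinG_isAdjClosed_eq_univ hne hS
  exact (hG.join hH).iso (induceUnivIso _).symm

lemma IsOATOnClosed.addComparable (v : V) (X : Set V) (hX : X ⊆ G.neighborSet v)
    (hG : IsOATOnClosed G) : IsOATOnClosed (addComparable G X) := by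
  intro S hne hS
  by_cases hnone : none ∈ S
  · by_cases hsome : (some ⁻¹' S).Nonempty
    · have hS' := hS.preimage (addComparable.someEmbedding G X).toHom
      have hXS : X ⊆ some ⁻¹' S := fun x hx => hS hnone (by simpa using hx)
      obtain ⟨v', hv'S, hXv'⟩ : ∃ v' ∈ some ⁻¹' S, X ⊆ G.neighborSet v' := by
        rcases X.eq_empty_or_nonempty with rfl | ⟨x, hx⟩
        · exact ⟨hsome.some, hsome.some_mem, Set.empty_subset _⟩
        · exact ⟨v, hS' (hXS hx) (hX hx).symm, hX⟩
      exact (IsOAT.comparable (⟨v', hv'S⟩ : some ⁻¹' S) _ (fun _ hx => hXv' hx)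
        (hG _ hsome hS')).iso (addComparable.induceIso G X hnone).symm
    · have hSnone : S ⊆ {none} := by
        rintro (_ | x) h
        exacts [rfl, absurd ⟨x, h⟩ hsome]
      have : Subsingleton S := (Set.subsingleton_singleton.anti hSnone).coe_sort
      have : Nonempty S := ⟨⟨none, hnone⟩⟩
      exact isOAT_of_subsingleton _
  · refine hG.induce_of_subset_range (addComparable.someEmbedding G X) hne hS ?_
    rintro (_ | x) h
    exacts [absurd h hnone, ⟨x, rfl⟩]

lemma IsOATOnClosed.attachClique (v : V) (q : ℕ) (hq : 1 ≤ q) (hG : IsOATOnClosed G) :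
    IsOATOnClosed (attachClique G v q) := by
  intro S hne hS
  by_cases hclique : ∃ i, Sum.inr i ∈ S
  · obtain ⟨i, hi⟩ := hclique
    have hv : Sum.inl v ∈ S := hS hi (by simp)
    have hall : ∀ j, Sum.inr j ∈ S := fun j => hS hv (by simp)
    exact (IsOAT.clique (⟨v, hv⟩ : Sum.inl ⁻¹' S) q hq
      (hG _ ⟨v, hv⟩ (hS.preimage (attachClique.inlEmbedding G v q).toHom))).iso
      (attachClique.induceIso G q hv hall).symm
  · refine hG.induce_of_subset_range (attachClique.inlEmbedding G v q) hne hS ?_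
    rintro (x | i) h
    exacts [⟨x, rfl⟩, absurd ⟨i, h⟩ hclique]

lemma IsOATOnClosed.of_iso (hG : IsOATOnClosed G) (e : G ≃g H) : IsOATOnClosed H :=
  fun _ hne hS => hG.induce_of_subset_range e.toEmbedding hne hS (by simp)

lemma IsOAT.isOATOnClosed (h : IsOAT G) : IsOATOnClosed G := by
  induction h with
  | single => exact isOATOnClosed_single
  | dunion _ _ ihG ihH => exact ihG.dUnion ihH
  | join hG hH => exact isOATOnClosed_joinG hG hH
  | comparable v X hX _ ih => exact ih.addComparable v X hX
  | clique v q hq _ ih => exact ih.attachClique v q hq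
  | iso _ e ih => exact ih.of_iso e

lemma isOAT_induce_of_components [Finite V]
    (hG : ∀ c : G.ConnectedComponent, IsOAT (G.induce c.supp)) (S : Set V) (hne : S.Nonempty)
    (hS : G.IsAdjClosed S) : IsOAT (G.induce S) := by
  induction S using WellFoundedLT.induction with
  | _ S ih =>
    obtain ⟨x, hx⟩ := hne
    set C := G.connectedComponentMk x
    have hCS : C.supp ⊆ S := hS.supp_subset hx
    by_cases hSC : S ⊆ C.supp
    · exact hCS.antisymm hSC ▸ hG C
    · have hrest : IsOAT (G.induce (S \ C.supp)) :=
        ih _ (Set.sdiff_ssubset_left_iff.mpr ⟨x, hx, rfl⟩) (Set.sdiff_nonempty.mpr hSC)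
          (hS.diff C.isAdjClosed_supp)
      exact ((hG C).dunion hrest).iso (C.isAdjClosed_supp.induceIsoDUnion hCS)

end OAT

/-- A graph is an OAT graph iff every connected component of it is an OAT graph. -/
theorem stmt9 {V : Type} [Fintype V] [Nonempty V] (G : SimpleGraph V) :
    IsOAT G ↔ ∀ c : G.ConnectedComponent, IsOAT (G.induce c.supp) := by
  refine ⟨fun h c => h.isOATOnClosed _ c.nonempty_supp c.isAdjClosed_supp, fun h => ?_⟩
  exact (isOAT_induce_of_components h _ Set.univ_nonempty isAdjClosed_univ).iso (induceUnivIso G)
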